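/- In O_q(B⁺) the elements z_{ij} = X_{ij}X_{jj}⁻¹ (1 ≤ i < j ≤ n+1) satisfy: z_{ij}z_{im} = q z_{im}z_{ij} for j < m; z_{ij}z_{lj} = q z_{lj}z_{ij} for i < l; z_{ij}z_{lm} = z_{lm}z_{ij} for i < l and j > m; and for i < l and j < m: z_{ij}z_{lm} = z_{lm}z_{ij} if j < l, z_{ij}z_{lm} = q⁻¹z_{lm}z_{ij} + q⁻¹q̂ z_{im} if j = l, and z_{ij}z_{lm} = z_{lm}z_{ij} + q̂ z_{im}z_{lj} if j > l. -/

import Mathlib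

open scoped TensorProduct

noncomputable section

namespace QSL

/-- The generator `X i j` of the free algebra underlying `O_q(SL_{n+1})`. -/
def Xf (k : Type) [Field k] (n : ℕ) (i j : Fin (n+1)) :
    FreeAlgebra k (Fin (n+1) × Fin (n+1)) :=
  FreeAlgebra.ι k (i, j)

/-- The number of inversions (the length `ℓ(σ)`) of a permutation. -/
def invCount {m : ℕ} (σ : Equiv.Perm (Fin m)) : ℕ :=
  (Finset.univ.filter (fun p : Fin m × Fin m => p.1 < p.2 ∧ σ p.2 < σ p.1)).card

/-- The quantum determinant `∑_σ (-q)^{ℓ(σ)} X_{1σ(1)} ⋯ X_{n+1,σ(n+1)}`. -/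
def qdet (k : Type) [Field k] (q : k) (n : ℕ) : FreeAlgebra k (Fin (n+1) × Fin (n+1)) :=
  ∑ σ : Equiv.Perm (Fin (n+1)),
    ((-q) ^ invCount σ) • (List.ofFn fun i => Xf k n i (σ i)).prod

/-- Defining relations of `O_q(SL_{n+1})`. -/
inductive SLRel (k : Type) [Field k] (q : k) (n : ℕ) :
    FreeAlgebra k (Fin (n+1) × Fin (n+1)) → FreeAlgebra k (Fin (n+1) × Fin (n+1)) → Prop
  | row {i j m : Fin (n+1)} (h : j < m) :
      SLRel k q n (Xf k n i j * Xf k n i m) (q • (Xf k n i m * Xf k n i j))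
  | col {i l j : Fin (n+1)} (h : i < l) :
      SLRel k q n (Xf k n i j * Xf k n l j) (q • (Xf k n l j * Xf k n i j))
  | swap {i l j m : Fin (n+1)} (h1 : i < l) (h2 : m < j) :
      SLRel k q n (Xf k n i j * Xf k n l m) (Xf k n l m * Xf k n i j)
  | mixed {i l j m : Fin (n+1)} (h1 : i < l) (h2 : j < m) :
      SLRel k q n (Xf k n i j * Xf k n l m)
        (Xf k n l m * Xf k n i j + (q - q⁻¹) • (Xf k n i m * Xf k n l j))
  | det : SLRel k q n (qdet k q n) 1

/-- The quantized coordinate ring `O_q(SL_{n+1})`. -/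
abbrev OqSL (k : Type) [Field k] (q : k) (n : ℕ) := RingQuot (SLRel k q n)

/-- The generator `X i j` of `O_q(SL_{n+1})`. -/
def XSL (k : Type) [Field k] (q : k) (n : ℕ) (i j : Fin (n+1)) : OqSL k q n :=
  RingQuot.mkAlgHom k (SLRel k q n) (Xf k n i j)

/-- Relations `X i j = 0` for `i > j`, defining `O_q(B⁺)`. -/
inductive BpRel (k : Type) [Field k] (q : k) (n : ℕ) : OqSL k q n → OqSL k q n → Prop
  | zero {i j : Fin (n+1)} (h : j < i) : BpRel k q n (XSL k q n i j) 0

/-- Relations `X i j = 0` for `i < j`, defining `O_q(B⁻)`. -/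
inductive BmRel (k : Type) [Field k] (q : k) (n : ℕ) : OqSL k q n → OqSL k q n → Prop
  | zero {i j : Fin (n+1)} (h : i < j) : BmRel k q n (XSL k q n i j) 0

/-- Relations `X i j = 0` for `i ≠ j`, defining `O_q(T)`. -/
inductive TRel (k : Type) [Field k] (q : k) (n : ℕ) : OqSL k q n → OqSL k q n → Prop
  | zero {i j : Fin (n+1)} (h : i ≠ j) : TRel k q n (XSL k q n i j) 0

/-- The quantized coordinate ring `O_q(B⁺)` of the positive Borel. -/
abbrev OqBp (k : Type) [Field k] (q : k) (n : ℕ) := RingQuot (BpRel k q n)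

/-- The quantized coordinate ring `O_q(B⁻)` of the negative Borel. -/
abbrev OqBm (k : Type) [Field k] (q : k) (n : ℕ) := RingQuot (BmRel k q n)

/-- The quantized coordinate ring `O_q(T)` of the maximal torus. -/
abbrev OqT (k : Type) [Field k] (q : k) (n : ℕ) := RingQuot (TRel k q n)

/-- The coset of `X i j` in `O_q(B⁺)`. -/
def XBp (k : Type) [Field k] (q : k) (n : ℕ) (i j : Fin (n+1)) : OqBp k q n :=
  RingQuot.mkAlgHom k (BpRel k q n) (XSL k q n i j)

/-- The coset of `X i j` in `O_q(B⁻)`. -/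
def XBm (k : Type) [Field k] (q : k) (n : ℕ) (i j : Fin (n+1)) : OqBm k q n :=
  RingQuot.mkAlgHom k (BmRel k q n) (XSL k q n i j)

/-- The coset `Y i i` of `X i i` in `O_q(T)`. -/
def YT (k : Type) [Field k] (q : k) (n : ℕ) (i : Fin (n+1)) : OqT k q n :=
  RingQuot.mkAlgHom k (TRel k q n) (XSL k q n i i)

/-- `y i j = X_{ii}⁻¹ X_{ij}` in `O_q(B⁺)`. -/
def yY (k : Type) [Field k] (q : k) (n : ℕ) (i j : Fin (n+1)) : OqBp k q n :=
  Ring.inverse (XBp k q n i i) * XBp k q n i j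

/-- `z i j = X_{ij} X_{jj}⁻¹` in `O_q(B⁺)`. -/
def zZ (k : Type) [Field k] (q : k) (n : ℕ) (i j : Fin (n+1)) : OqBp k q n :=
  XBp k q n i j * Ring.inverse (XBp k q n j j)

/-- The subalgebra `O_q(N⁺)` of `O_q(B⁺)`, generated by the `X_{ii}⁻¹X_{ij}`, `i < j`. -/
def OqNp (k : Type) [Field k] (q : k) (n : ℕ) : Subalgebra k (OqBp k q n) :=
  Algebra.adjoin k {a | ∃ i j : Fin (n+1), i < j ∧ a = yY k q n i j}

/-- The subalgebra `O_q(N⁺)'` of `O_q(B⁺)`, generated by the `X_{ij}X_{jj}⁻¹`, `i < j`. -/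
def OqNp' (k : Type) [Field k] (q : k) (n : ℕ) : Subalgebra k (OqBp k q n) :=
  Algebra.adjoin k {a | ∃ i j : Fin (n+1), i < j ∧ a = zZ k q n i j}

/-- `X_{jj}⁻¹ X_{ji}` in `O_q(B⁻)` (for `i < j`). -/
def yNm (k : Type) [Field k] (q : k) (n : ℕ) (i j : Fin (n+1)) : OqBm k q n :=
  Ring.inverse (XBm k q n j j) * XBm k q n j i

/-- `X_{ji} X_{ii}⁻¹` in `O_q(B⁻)` (for `i < j`). -/
def zNm (k : Type) [Field k] (q : k) (n : ℕ) (i j : Fin (n+1)) : OqBm k q n :=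
  XBm k q n j i * Ring.inverse (XBm k q n i i)

/-- The subalgebra `O_q(N⁻)` of `O_q(B⁻)`, generated by the `X_{jj}⁻¹X_{ji}`, `i < j`. -/
def OqNm (k : Type) [Field k] (q : k) (n : ℕ) : Subalgebra k (OqBm k q n) :=
  Algebra.adjoin k {a | ∃ i j : Fin (n+1), i < j ∧ a = yNm k q n i j}

/-- The subalgebra `O_q(N⁻)'` of `O_q(B⁻)`, generated by the `X_{ji}X_{ii}⁻¹`, `i < j`. -/
def OqNm' (k : Type) [Field k] (q : k) (n : ℕ) : Subalgebra k (OqBm k q n) :=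
  Algebra.adjoin k {a | ∃ i j : Fin (n+1), i < j ∧ a = zNm k q n i j}

end QSL

/-!
Modulo the `X i j` with `i > j`, only the identity permutation survives in the quantum
determinant, so `X₁₁ ⋯ X_{n+1,n+1} = 1`; the diagonal generators commute pairwise, hence each of
them is a unit. Conjugation by `X_{jj}⁻¹` rescales a generator `X_{lm}` by `1`, `q⁻¹` or `q`, so
every product `z_{ij} z_{lm}` is a scalar multiple of `X_{ij} X_{lm} X_{jj}⁻¹ X_{mm}⁻¹`, and the
relations among the `z` follow from those among the `X`.
-/

section RingInverse

variable {R A : Type*} [CommSemiring R] [Semiring A] [Algebra R A]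

theorem Ring.inverse_mul_eq_smul_mul_inverse {a d : A} {r : R} (hd : IsUnit d)
    (h : a * d = r • (d * a)) : Ring.inverse d * a = r • (a * Ring.inverse d) := by
  calc Ring.inverse d * a = Ring.inverse d * (a * d) * Ring.inverse d := by
        rw [mul_assoc, mul_assoc, Ring.mul_inverse_cancel d hd, mul_one]
    _ = r • (a * Ring.inverse d) := by
        rw [h, mul_smul_comm, smul_mul_assoc, ← mul_assoc, Ring.inverse_mul_cancel d hd,
          one_mul]

theorem Commute.ringInverse_left {a d : A} (h : Commute d a) (hd : IsUnit d) :
    Commute (Ring.inverse d) a := by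
  rw [Ring.inverse_of_isUnit hd]
  exact h.units_inv_left

theorem Ring.mul_inverse_mul_mul_inverse {a b d e : A} {c : R}
    (h : Ring.inverse d * b = c • (b * Ring.inverse d)) :
    a * Ring.inverse d * (b * Ring.inverse e)
      = c • (a * b * (Ring.inverse d * Ring.inverse e)) := by
  rw [mul_assoc a, ← mul_assoc _ b, h, smul_mul_assoc, mul_smul_comm]
  simp only [mul_assoc]

end RingInverse

theorem List.isUnit_of_mem_of_isUnit_prod {M : Type*} [Monoid M] {l : List M}
    (hl : l.Pairwise Commute) (h : IsUnit l.prod) {x : M} (hx : x ∈ l) : IsUnit x := by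
  induction l with
  | nil => exact absurd hx List.not_mem_nil
  | cons a t ih =>
    rw [List.pairwise_cons] at hl
    rw [List.prod_cons, (Commute.list_prod_right _ _ hl.1).isUnit_mul_iff] at h
    rcases List.mem_cons.mp hx with rfl | hxt
    · exact h.1
    · exact ih hl.2 h.2 hxt

theorem Equiv.Perm.eq_one_of_forall_le_apply {m : ℕ} {σ : Equiv.Perm (Fin m)}
    (h : ∀ i, i ≤ σ i) : σ = 1 := by
  have hsum : ∑ i : Fin m, (i : ℕ) = ∑ i : Fin m, (σ i : ℕ) :=
    (Equiv.sum_comp σ fun i => (i : ℕ)).symm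
  have heq := (Finset.sum_eq_sum_iff_of_le fun i _ => Fin.le_def.mp (h i)).mp hsum
  exact Equiv.ext fun i => Fin.ext (heq i (Finset.mem_univ i)).symm

namespace QSL

theorem invCount_one {m : ℕ} : invCount (1 : Equiv.Perm (Fin m)) = 0 := by
  rw [invCount, Finset.card_eq_zero, Finset.filter_eq_empty_iff]
  rintro p - ⟨h1, h2⟩
  exact lt_asymm h1 h2

variable {k : Type} [Field k] {q : k} {n : ℕ}

def toOqBp (k : Type) [Field k] (q : k) (n : ℕ) :
    FreeAlgebra k (Fin (n+1) × Fin (n+1)) →ₐ[k] OqBp k q n :=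
  (RingQuot.mkAlgHom k (BpRel k q n)).comp (RingQuot.mkAlgHom k (SLRel k q n))

theorem toOqBp_Xf (i j : Fin (n+1)) : toOqBp k q n (Xf k n i j) = XBp k q n i j := rfl

theorem toOqBp_eq_of_rel {a b : FreeAlgebra k (Fin (n+1) × Fin (n+1))} (h : SLRel k q n a b) :
    toOqBp k q n a = toOqBp k q n b :=
  congrArg (RingQuot.mkAlgHom k (BpRel k q n)) (RingQuot.mkAlgHom_rel k h)

theorem XBp_row {i j m : Fin (n+1)} (h : j < m) :
    XBp k q n i j * XBp k q n i m = q • (XBp k q n i m * XBp k q n i j) := by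
  simpa only [map_mul, map_smul, toOqBp_Xf] using toOqBp_eq_of_rel (SLRel.row (i := i) h)

theorem XBp_col {i l j : Fin (n+1)} (h : i < l) :
    XBp k q n i j * XBp k q n l j = q • (XBp k q n l j * XBp k q n i j) := by
  simpa only [map_mul, map_smul, toOqBp_Xf] using toOqBp_eq_of_rel (SLRel.col (j := j) h)

theorem XBp_swap {i l j m : Fin (n+1)} (h1 : i < l) (h2 : m < j) :
    XBp k q n i j * XBp k q n l m = XBp k q n l m * XBp k q n i j := by
  simpa only [map_mul, toOqBp_Xf] using toOqBp_eq_of_rel (SLRel.swap h1 h2)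

theorem XBp_mixed {i l j m : Fin (n+1)} (h1 : i < l) (h2 : j < m) :
    XBp k q n i j * XBp k q n l m
      = XBp k q n l m * XBp k q n i j + (q - q⁻¹) • (XBp k q n i m * XBp k q n l j) := by
  simpa only [map_mul, map_add, map_smul, toOqBp_Xf] using
    toOqBp_eq_of_rel (SLRel.mixed h1 h2)

theorem XBp_eq_zero {i j : Fin (n+1)} (h : j < i) : XBp k q n i j = 0 :=
  (RingQuot.mkAlgHom_rel k (BpRel.zero (q := q) h)).trans (map_zero _)

theorem XBp_commute_of_lt {i l j m : Fin (n+1)} (h1 : i < l) (h2 : j < m) (hlj : j < l) :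
    Commute (XBp k q n i j) (XBp k q n l m) := by
  have h := XBp_mixed (q := q) h1 h2
  rwa [XBp_eq_zero hlj, mul_zero, smul_zero, add_zero] at h

theorem XBp_diag_commute {j l m : Fin (n+1)} (hjl : j ≠ l) (hjm : j ≠ m) :
    Commute (XBp k q n j j) (XBp k q n l m) := by
  rcases lt_or_ge m l with hml | hlm
  · rw [XBp_eq_zero hml]
    exact Commute.zero_right _
  rcases hjl.lt_or_gt with hjl | hlj
  · exact XBp_commute_of_lt hjl (hjl.trans_le hlm) hjl
  rcases hjm.lt_or_gt with hjm | hmj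
  · exact (XBp_swap hlj hjm).symm
  · exact (XBp_commute_of_lt hlj hmj hmj).symm

theorem toOqBp_qdet :
    toOqBp k q n (qdet k q n) = (List.ofFn fun i => XBp k q n i i).prod := by
  rw [qdet, map_sum, Finset.sum_eq_single_of_mem 1 (Finset.mem_univ _)]
  · simp only [invCount_one, pow_zero, one_smul, map_list_prod, List.map_ofFn]
    rfl
  · intro σ _ hσ
    obtain ⟨i, hi⟩ : ∃ i, σ i < i := by
      by_contra! h
      exact hσ (Equiv.Perm.eq_one_of_forall_le_apply h)
    rw [map_smul, map_list_prod, List.prod_eq_zero, smul_zero]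
    exact List.mem_map.mpr ⟨_, List.mem_ofFn.mpr ⟨i, rfl⟩, XBp_eq_zero hi⟩

theorem prod_XBp_diag : (List.ofFn fun i => XBp k q n i i).prod = 1 := by
  rw [← toOqBp_qdet, toOqBp_eq_of_rel SLRel.det, map_one]

theorem isUnit_XBp_diag (j : Fin (n+1)) : IsUnit (XBp k q n j j) := by
  refine List.isUnit_of_mem_of_isUnit_prod (l := List.ofFn fun i => XBp k q n i i) ?_
    (prod_XBp_diag (q := q) ▸ isUnit_one) (List.mem_ofFn.mpr ⟨j, rfl⟩)
  exact List.pairwise_ofFn.mpr fun i l hil => XBp_diag_commute hil.ne hil.ne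

theorem inverse_XBp_diag_commute {j l m : Fin (n+1)} (hjl : j ≠ l) (hjm : j ≠ m) :
    Commute (Ring.inverse (XBp k q n j j)) (XBp k q n l m) :=
  (XBp_diag_commute hjl hjm).ringInverse_left (isUnit_XBp_diag j)

theorem inverse_XBp_diag_mul_row (hq0 : q ≠ 0) {j m : Fin (n+1)} (h : j < m) :
    Ring.inverse (XBp k q n j j) * XBp k q n j m
      = q⁻¹ • (XBp k q n j m * Ring.inverse (XBp k q n j j)) := by
  refine Ring.inverse_mul_eq_smul_mul_inverse (isUnit_XBp_diag j) ?_
  rw [XBp_row h, smul_smul, inv_mul_cancel₀ hq0, one_smul]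

theorem inverse_XBp_diag_mul_col {l j : Fin (n+1)} (h : l < j) :
    Ring.inverse (XBp k q n j j) * XBp k q n l j
      = q • (XBp k q n l j * Ring.inverse (XBp k q n j j)) :=
  Ring.inverse_mul_eq_smul_mul_inverse (isUnit_XBp_diag j) (XBp_col h)

theorem zZ_mul_zZ {i j l m : Fin (n+1)} {c : k}
    (h : Ring.inverse (XBp k q n j j) * XBp k q n l m
      = c • (XBp k q n l m * Ring.inverse (XBp k q n j j))) :
    zZ k q n i j * zZ k q n l m
      = c • (XBp k q n i j * XBp k q n l m
        * (Ring.inverse (XBp k q n j j) * Ring.inverse (XBp k q n m m))) :=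
  Ring.mul_inverse_mul_mul_inverse h

theorem zZ_mul_zZ_of_ne {i j l m : Fin (n+1)} (hjl : j ≠ l) (hjm : j ≠ m) :
    zZ k q n i j * zZ k q n l m
      = XBp k q n i j * XBp k q n l m
        * (Ring.inverse (XBp k q n j j) * Ring.inverse (XBp k q n m m)) := by
  rw [zZ_mul_zZ (c := 1) (by rw [one_smul]; exact (inverse_XBp_diag_commute hjl hjm).eq),
    one_smul]

theorem inverse_XBp_diag_mul_comm (j m : Fin (n+1)) :
    Ring.inverse (XBp k q n j j) * Ring.inverse (XBp k q n m m)
      = Ring.inverse (XBp k q n m m) * Ring.inverse (XBp k q n j j) := by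
  rcases eq_or_ne j m with rfl | hjm
  · rfl
  · exact (XBp_diag_commute hjm hjm).ringInverse_ringInverse.eq

theorem zZ_mul_zZ_same_row {i j m : Fin (n+1)} (hij : i < j) (hjm : j < m) :
    zZ k q n i j * zZ k q n i m = q • (zZ k q n i m * zZ k q n i j) := by
  rw [zZ_mul_zZ_of_ne hij.ne' hjm.ne, zZ_mul_zZ_of_ne (hij.trans hjm).ne' hjm.ne', XBp_row hjm,
    smul_mul_assoc, inverse_XBp_diag_mul_comm]

theorem zZ_mul_zZ_same_col {i l j : Fin (n+1)} (hil : i < l) (hlj : l < j) :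
    zZ k q n i j * zZ k q n l j = q • (zZ k q n l j * zZ k q n i j) := by
  rw [zZ_mul_zZ (inverse_XBp_diag_mul_col hlj),
    zZ_mul_zZ (inverse_XBp_diag_mul_col (hil.trans hlj)), XBp_col hil, smul_mul_assoc]

theorem zZ_mul_zZ_of_nested {i l m j : Fin (n+1)} (hil : i < l) (hlm : l < m) (hmj : m < j) :
    zZ k q n i j * zZ k q n l m = zZ k q n l m * zZ k q n i j := by
  rw [zZ_mul_zZ_of_ne (hlm.trans hmj).ne' hmj.ne', zZ_mul_zZ_of_ne (hil.trans hlm).ne' hmj.ne,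
    XBp_swap hil hmj, inverse_XBp_diag_mul_comm]

theorem zZ_mul_zZ_of_disjoint {i j l m : Fin (n+1)} (hij : i < j) (hjl : j < l) (hlm : l < m) :
    zZ k q n i j * zZ k q n l m = zZ k q n l m * zZ k q n i j := by
  rw [zZ_mul_zZ_of_ne hjl.ne (hjl.trans hlm).ne, zZ_mul_zZ_of_ne (hij.trans (hjl.trans hlm)).ne'
      (hjl.trans hlm).ne', XBp_commute_of_lt (hij.trans hjl) (hjl.trans hlm) hjl,
    inverse_XBp_diag_mul_comm]

theorem zZ_mul_zZ_of_adjacent (hq0 : q ≠ 0) {i j m : Fin (n+1)} (hij : i < j) (hjm : j < m) :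
    zZ k q n i j * zZ k q n j m
      = q⁻¹ • (zZ k q n j m * zZ k q n i j) + (q⁻¹ * (q - q⁻¹)) • zZ k q n i m := by
  have hcancel : XBp k q n i m * XBp k q n j j
      * (Ring.inverse (XBp k q n j j) * Ring.inverse (XBp k q n m m)) = zZ k q n i m := by
    rw [mul_assoc, ← mul_assoc (XBp k q n j j), Ring.mul_inverse_cancel _ (isUnit_XBp_diag j),
      one_mul, zZ]
  rw [zZ_mul_zZ (inverse_XBp_diag_mul_row hq0 hjm), zZ_mul_zZ_of_ne (hij.trans hjm).ne' hjm.ne',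
    XBp_mixed hij hjm, add_mul, smul_mul_assoc, hcancel, smul_add, smul_smul,
    inverse_XBp_diag_mul_comm]

theorem zZ_mul_zZ_of_overlapping {i l j m : Fin (n+1)} (hil : i < l) (hlj : l < j) (hjm : j < m) :
    zZ k q n i j * zZ k q n l m
      = zZ k q n l m * zZ k q n i j + (q - q⁻¹) • (zZ k q n i m * zZ k q n l j) := by
  rw [zZ_mul_zZ_of_ne hlj.ne' hjm.ne, zZ_mul_zZ_of_ne ((hil.trans hlj).trans hjm).ne' hjm.ne',
    zZ_mul_zZ_of_ne (hlj.trans hjm).ne' hjm.ne', XBp_mixed hil hjm, add_mul, smul_mul_assoc,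
    inverse_XBp_diag_mul_comm]

end QSL

open QSL in
theorem z_relations_general (k : Type) [Field k] (q : k) (hq0 : q ≠ 0)
    (n : ℕ) :
    (∀ i j m : Fin (n+1), i < j → j < m →
      zZ k q n i j * zZ k q n i m = q • (zZ k q n i m * zZ k q n i j)) ∧
    (∀ i l j : Fin (n+1), i < l → l < j →
      zZ k q n i j * zZ k q n l j = q • (zZ k q n l j * zZ k q n i j)) ∧
    (∀ i l m j : Fin (n+1), i < l → l < m → m < j →
      zZ k q n i j * zZ k q n l m = zZ k q n l m * zZ k q n i j) ∧
    (∀ i j l m : Fin (n+1), i < j → j < l → l < m →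
      zZ k q n i j * zZ k q n l m = zZ k q n l m * zZ k q n i j) ∧
    (∀ i j m : Fin (n+1), i < j → j < m →
      zZ k q n i j * zZ k q n j m =
        q⁻¹ • (zZ k q n j m * zZ k q n i j) + (q⁻¹ * (q - q⁻¹)) • zZ k q n i m) ∧
    (∀ i l j m : Fin (n+1), i < l → l < j → j < m →
      zZ k q n i j * zZ k q n l m =
        zZ k q n l m * zZ k q n i j + (q - q⁻¹) • (zZ k q n i m * zZ k q n l j)) :=
  ⟨fun _ _ _ => zZ_mul_zZ_same_row,
   fun _ _ _ => zZ_mul_zZ_same_col,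
   fun _ _ _ _ => zZ_mul_zZ_of_nested,
   fun _ _ _ _ => zZ_mul_zZ_of_disjoint,
   fun _ _ _ => zZ_mul_zZ_of_adjacent hq0,
   fun _ _ _ _ => zZ_mul_zZ_of_overlapping⟩

open QSL in
/-- The defining relations satisfied by the elements `z i j = X_{ij}X_{jj}⁻¹` of `O_q(B⁺)`. -/
theorem z_relations (k : Type) [Field k] (q : k) (hq0 : q ≠ 0)
    (hq : ∀ m : ℕ, 0 < m → q ^ m ≠ 1) (n : ℕ) (hn : 1 ≤ n) :
    (∀ i j m : Fin (n+1), i < j → j < m →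
      zZ k q n i j * zZ k q n i m = q • (zZ k q n i m * zZ k q n i j)) ∧
    (∀ i l j : Fin (n+1), i < l → l < j →
      zZ k q n i j * zZ k q n l j = q • (zZ k q n l j * zZ k q n i j)) ∧
    (∀ i l m j : Fin (n+1), i < l → l < m → m < j →
      zZ k q n i j * zZ k q n l m = zZ k q n l m * zZ k q n i j) ∧
    (∀ i j l m : Fin (n+1), i < j → j < l → l < m →
      zZ k q n i j * zZ k q n l m = zZ k q n l m * zZ k q n i j) ∧
    (∀ i j m : Fin (n+1), i < j → j < m →
      zZ k q n i j * zZ k q n j m =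
        q⁻¹ • (zZ k q n j m * zZ k q n i j) + (q⁻¹ * (q - q⁻¹)) • zZ k q n i m) ∧
    (∀ i l j m : Fin (n+1), i < l → l < j → j < m →
      zZ k q n i j * zZ k q n l m =
        zZ k q n l m * zZ k q n i j + (q - q⁻¹) • (zZ k q n i m * zZ k q n l j)) :=
  z_relations_general k q hq0 n
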